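/- For any degree-0 element α of a filtered shifted L∞-algebra L and any v ∈ L, the square of the twisted differential satisfies ∂^α ∘ ∂^α (v) = −{curv(α), v}^α₂, where {·,·}^α is the twisted binary bracket. -/

import Mathlib

open scoped BigOperators

/-! # Core framework: filtered shifted `L∞`-algebras (`SLie∞`-algebras)

A filtered shifted `L∞`-algebra is modelled as a `ℤ`-graded `k`-module `L` with
degree-`1` graded-symmetric multibrackets (the differential absorbed as the unary
bracket), a complete descending filtration compatible with the brackets, and the
shifted `L∞` (Jacobi) relations expressed with Koszul signs and shuffles. -/

/-- The Koszul sign of a permutation `σ` acting on homogeneous elements of degrees `d`. -/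
def koszulSign (k : Type) [Field k] {m : ℕ} (σ : Equiv.Perm (Fin m)) (d : Fin m → ℤ) : k :=
  ∏ p ∈ Finset.univ.filter (fun p : Fin m × Fin m => p.1 < p.2 ∧ σ p.2 < σ p.1),
    (-1 : k) ^ ((d p.1) * (d p.2)).natAbs

/-- The set of `(p, m-p)`-shuffles in the symmetric group on `m` letters. -/
def shuffles (p m : ℕ) : Finset (Equiv.Perm (Fin m)) :=
  Finset.univ.filter fun σ =>
    (∀ i j : Fin m, i < j → (j : ℕ) < p → σ i < σ j) ∧
    (∀ i j : Fin m, i < j → p ≤ (i : ℕ) → σ i < σ j)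

section Front
variable {L : Type}

/-- First `p` arguments `v (σ 1), …, v (σ p)`. -/
def frontV {m p : ℕ} (hpm : p ≤ m) (v : Fin m → L) (σ : Equiv.Perm (Fin m)) : Fin p → L :=
  fun i => v (σ ⟨i, lt_of_lt_of_le i.2 hpm⟩)

/-- Remaining arguments `v (σ (p+1)), …, v (σ m)`. -/
def backV {m p : ℕ} (hpm : p ≤ m) (v : Fin m → L) (σ : Equiv.Perm (Fin m)) :
    Fin (m - p) → L :=
  fun j => v (σ ⟨p + j, by have := j.2; omega⟩)

end Front

/-- Convergence of the series `∑ f i` to `s` in the topology defined by a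
descending filtration `F` by submodules. -/
def HasFSumF (k : Type) [Field k] {L : Type} [AddCommGroup L] [Module k L]
    (F : ℕ → Submodule k L) (f : ℕ → L) (s : L) : Prop :=
  ∀ n : ℕ, ∃ N : ℕ, ∀ M : ℕ, N ≤ M → s - ∑ i ∈ Finset.range M, f i ∈ F n

/-- The (choice of a) limit of a series in the filtration topology; junk value `0`
if the series does not converge. -/
noncomputable def limF (k : Type) [Field k] {L : Type} [AddCommGroup L] [Module k L]
    (F : ℕ → Submodule k L) (f : ℕ → L) : L :=
  letI := Classical.propDecidable (∃ s, HasFSumF k F f s)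
  if h : ∃ s, HasFSumF k F f s then h.choose else 0

/-- The term `ε(σ; v) ⬝ out ( inn (v_{σ(1)}, …, v_{σ(p)}), v_{σ(p+1)}, …, v_{σ(m)} )`
appearing in the shifted `L∞` relations and in the compatibility equations for
`∞`-morphisms. -/
def shTerm (k : Type) [Field k] {L L' : Type} [AddCommGroup L] [Module k L]
    [AddCommGroup L'] [Module k L']
    (inn : ∀ m : ℕ, MultilinearMap k (fun _ : Fin m => L) L)
    (out : ∀ m : ℕ, MultilinearMap k (fun _ : Fin m => L) L')
    {m : ℕ} (v : Fin m → L) (d : Fin m → ℤ) (p : ℕ) (hpm : p ≤ m)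
    (σ : Equiv.Perm (Fin m)) : L' :=
  koszulSign k σ d • out (m - p + 1) (Fin.cons (inn p (frontV hpm v σ)) (backV hpm v σ))

/-- A filtered shifted `L∞`-algebra (`SLie∞`-algebra): a `ℤ`-graded module with
degree-`1` graded-symmetric brackets (the differential is the unary bracket),
satisfying the shifted `L∞` relations, together with a complete descending
filtration `L = filt 1 ⊇ filt 2 ⊇ ⋯` compatible with the brackets. -/
structure FSLie (k : Type) [Field k] [CharZero k] (L : Type) [AddCommGroup L]
    [Module k L] where
  /-- the grading (cochain degrees) -/
  gr : ℤ → Submodule k L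
  internal : DirectSum.IsInternal gr
  /-- the multibrackets; `br 1` is the differential `∂` -/
  br : ∀ m : ℕ, MultilinearMap k (fun _ : Fin m => L) L
  br_zero : br 0 = 0
  br_degree : ∀ (m : ℕ) (v : Fin m → L) (d : Fin m → ℤ),
      (∀ i, v i ∈ gr (d i)) → br m v ∈ gr ((∑ i, d i) + 1)
  br_symm : ∀ (m : ℕ) (σ : Equiv.Perm (Fin m)) (v : Fin m → L) (d : Fin m → ℤ),
      (∀ i, v i ∈ gr (d i)) → br m (v ∘ σ) = koszulSign k σ d • br m v
  /-- the complete descending filtration -/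
  filt : ℕ → Submodule k L
  filt_zero : filt 0 = ⊤
  filt_one : filt 1 = ⊤
  filt_antitone : ∀ {i j : ℕ}, i ≤ j → filt j ≤ filt i
  filt_br : ∀ (m : ℕ) (v : Fin m → L) (w : Fin m → ℕ), 2 ≤ m →
      (∀ i, v i ∈ filt (w i)) → br m v ∈ filt (∑ i, w i)
  filt_diff : ∀ (n : ℕ) (x : L), x ∈ filt n → br 1 ![x] ∈ filt n
  hausdorff : ∀ x : L, (∀ n, x ∈ filt n) → x = 0
  complete : ∀ a : ℕ → L, (∀ n, a (n + 1) - a n ∈ filt (n + 1)) →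
      ∃ s, ∀ n, s - a n ∈ filt (n + 1)
  gr_closed : ∀ (d : ℤ) (f : ℕ → L) (s : L), (∀ n, f n ∈ gr d) →
      HasFSumF k filt f s → s ∈ gr d
  /-- the shifted `L∞` relations (with the differential absorbed as `br 1`) -/
  jacobi : ∀ (m : ℕ) (v : Fin m → L) (d : Fin m → ℤ), (∀ i, v i ∈ gr (d i)) →
      (∑ p ∈ (Finset.Icc 1 m).attach, ∑ σ ∈ shuffles p.1 m,
        shTerm k br br v d p.1 (Finset.mem_Icc.mp p.2).2 σ) = 0

section Defs
variable (k : Type) [Field k] [CharZero k] {L L' : Type} [AddCommGroup L] [Module k L]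
  [AddCommGroup L'] [Module k L']

/-- The terms of the curvature series `curv(α) = ∂α + ∑_{m ≥ 2} (1/m!) {α,…,α}`
(here `∂α = {α}` is the `m = 1` term). -/
def curvSeries (A : FSLie k L) (α : L) : ℕ → L :=
  fun m => if m = 0 then 0 else ((m.factorial : k)⁻¹) • A.br m (fun _ => α)

/-- A Maurer–Cartan element: a degree-`0` element with vanishing curvature. -/
def IsMC (A : FSLie k L) (α : L) : Prop :=
  α ∈ A.gr 0 ∧ HasFSumF k A.filt (curvSeries k A α) 0

/-- The terms of the series defining the twisted differential
`∂^α(x) = ∂x + ∑_{j ≥ 1} (1/j!) {α,…,α,x}`. -/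
def twDiffSeries (A : FSLie k L) (α x : L) : ℕ → L :=
  fun j => ((j.factorial : k)⁻¹) • A.br (j + 1) (Fin.snoc (fun _ : Fin j => α) x)

/-- The terms of the series defining the twisted brackets
`{v₁,…,v_m}^α = ∑_{j ≥ 0} (1/j!) {α,…,α,v₁,…,v_m}`. -/
def twBrSeries (A : FSLie k L) (α : L) {m : ℕ} (v : Fin m → L) : ℕ → L :=
  fun j => ((j.factorial : k)⁻¹) • A.br (j + m) (Fin.append (fun _ : Fin j => α) v)

/-- `A'` is the twist of `A` by `α`: same grading and filtration, and the brackets of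
`A'` are the sums of the twisted-bracket series of `A` at `α`. -/
def IsTwist (A A' : FSLie k L) (α : L) : Prop :=
  A'.gr = A.gr ∧ A'.filt = A.filt ∧
  ∀ (m : ℕ), 1 ≤ m → ∀ v : Fin m → L,
    HasFSumF k A.filt (twBrSeries k A α v) (A'.br m v)

end Defs

/-! ### Compositions, block shuffles, and `∞`-morphisms -/

/-- Compositions of `m` into `t` (ordered) positive parts. -/
def compositions (t m : ℕ) : Finset (Fin t → ℕ) :=
  (Fintype.piFinset fun _ : Fin t => Finset.range (m + 1)).filter
    fun c => (∀ i, 1 ≤ c i) ∧ (∑ i, c i) = m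

/-- The starting index of the `a`-th block of a composition `c`. -/
def offsetC {t : ℕ} (c : Fin t → ℕ) (a : Fin t) : ℕ :=
  ∑ i ∈ Finset.univ.filter (fun i => i < a), c i

theorem offsetC_add_lt {t m : ℕ} {c : Fin t → ℕ} (hc : c ∈ compositions t m)
    (a : Fin t) {j : ℕ} (hj : j < c a) : offsetC c a + j < m := by
  obtain ⟨-, -, hsum⟩ : c ∈ Fintype.piFinset (fun _ : Fin t => Finset.range (m+1)) ∧
      (∀ i, 1 ≤ c i) ∧ (∑ i, c i) = m := by
    simpa [compositions, and_assoc] using hc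
  have hna : a ∉ Finset.univ.filter (fun i => i < a) := by simp
  have h2 : (∑ i ∈ insert a (Finset.univ.filter (fun i => i < a)), c i) ≤ ∑ i, c i :=
    Finset.sum_le_sum_of_subset (Finset.subset_univ _)
  rw [Finset.sum_insert hna] at h2
  have h1 : offsetC c a + c a ≤ ∑ i, c i := by unfold offsetC; omega
  omega

/-- The `SH`-shuffles associated to a composition `c` of `m`: permutations that are
increasing within each block and whose values at the first elements of the blocks
are increasing. -/
def blockShuffles {t : ℕ} (c : Fin t → ℕ) (m : ℕ) : Finset (Equiv.Perm (Fin m)) :=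
  Finset.univ.filter fun σ =>
    (∀ a : Fin t, ∀ i j : Fin m, i < j → offsetC c a ≤ (i : ℕ) →
        (j : ℕ) < offsetC c a + c a → σ i < σ j) ∧
    (∀ a b : Fin t, a < b → ∀ i j : Fin m, (i : ℕ) = offsetC c a →
        (j : ℕ) = offsetC c b → σ i < σ j)

/-- The index `τ(offset(a) + j)` of the `j`-th element of the `a`-th block. -/
def blockIdx {t m : ℕ} {c : Fin t → ℕ} (hc : c ∈ compositions t m)
    (τ : Equiv.Perm (Fin m)) (a : Fin t) (j : Fin (c a)) : Fin m :=
  τ ⟨offsetC c a + j, offsetC_add_lt hc a j.2⟩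

section Mor
variable (k : Type) [Field k] [CharZero k] {L L' : Type} [AddCommGroup L] [Module k L]
  [AddCommGroup L'] [Module k L']

/-- Taylor components of a (continuous, degree-`0`, graded-symmetric) candidate
`∞`-morphism between filtered shifted `L∞`-algebras, without the compatibility
with the codifferentials. -/
structure MorData (A : FSLie k L) (B : FSLie k L') where
  T : ∀ m : ℕ, MultilinearMap k (fun _ : Fin m => L) L'
  T_zero : T 0 = 0
  T_degree : ∀ (m : ℕ) (v : Fin m → L) (d : Fin m → ℤ),
      (∀ i, v i ∈ A.gr (d i)) → T m v ∈ B.gr (∑ i, d i)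
  T_symm : ∀ (m : ℕ) (σ : Equiv.Perm (Fin m)) (v : Fin m → L) (d : Fin m → ℤ),
      (∀ i, v i ∈ A.gr (d i)) → T m (v ∘ σ) = koszulSign k σ d • T m v
  T_filt : ∀ (m : ℕ) (v : Fin m → L) (w : Fin m → ℕ),
      (∀ i, v i ∈ A.filt (w i)) → T m v ∈ B.filt (∑ i, w i)

/-- Left-hand side (the `F ∘ Q` side) of the compatibility equation of an
`∞`-morphism with the codifferentials, evaluated on `v₁ ⋯ v_m`. -/
def compLHS (A : FSLie k L) (T : ∀ m : ℕ, MultilinearMap k (fun _ : Fin m => L) L')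
    {m : ℕ} (v : Fin m → L) (d : Fin m → ℤ) : L' :=
  ∑ p ∈ (Finset.Icc 1 m).attach, ∑ σ ∈ shuffles p.1 m,
    shTerm k A.br T v d p.1 (Finset.mem_Icc.mp p.2).2 σ

/-- Right-hand side (the `Q̃ ∘ F` side) of the compatibility equation, a sum over
partitions of `{1,…,m}` encoded by compositions and `SH`-shuffles. -/
def compRHS (B : FSLie k L') (T : ∀ m : ℕ, MultilinearMap k (fun _ : Fin m => L) L')
    {m : ℕ} (v : Fin m → L) (d : Fin m → ℤ) : L' :=
  ∑ t ∈ (Finset.Icc 1 m).attach, ∑ c ∈ (compositions t.1 m).attach,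
    ∑ τ ∈ blockShuffles c.1 m,
      koszulSign k τ d •
        B.br t.1 (fun a => T (c.1 a) (fun j => v (blockIdx c.2 τ a j)))

/-- The compatibility equation of an `∞`-morphism with the codifferentials, on
homogeneous inputs `v` of degrees `d`. -/
def CompatEq (A : FSLie k L) (B : FSLie k L')
    (T : ∀ m : ℕ, MultilinearMap k (fun _ : Fin m => L) L')
    {m : ℕ} (v : Fin m → L) (d : Fin m → ℤ) : Prop :=
  compLHS k A T v d = compRHS k B T v d

/-- A (continuous) `∞`-morphism of filtered shifted `L∞`-algebras. -/
structure InfMor (A : FSLie k L) (B : FSLie k L') extends MorData k A B where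
  compat : ∀ (m : ℕ) (v : Fin m → L) (d : Fin m → ℤ),
      (∀ i, v i ∈ A.gr (d i)) → CompatEq k A B T v d

/-- The series whose sum is the pushforward `F_*(α) = ∑_{j ≥ 1} (1/j!) F'(α^j)`. -/
def pushSeries (T : ∀ m : ℕ, MultilinearMap k (fun _ : Fin m => L) L') (α : L) : ℕ → L' :=
  fun j => if j = 0 then 0 else ((j.factorial : k)⁻¹) • T j (fun _ => α)

end Mor

/-! ### Degree-indexed Taylor families, twisting and composition of enhanced morphisms -/

/-- A degree-indexed family of Taylor coefficients: the value on `v₁ ⋯ v_m` where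
`vᵢ` is (declared) homogeneous of degree `dᵢ`. -/
def Fam (k : Type) [Field k] (L L' : Type) : Type :=
  ∀ m : ℕ, (Fin m → L) → (Fin m → ℤ) → L'

section Fam
variable (k : Type) [Field k] [CharZero k] {L₁ L₂ L₃ : Type}
  [AddCommGroup L₁] [Module k L₁] [AddCommGroup L₂] [Module k L₂]
  [AddCommGroup L₃] [Module k L₃]

/-- The degree-indexed family underlying Taylor components `T`. -/
def famOf (T : ∀ m : ℕ, MultilinearMap k (fun _ : Fin m => L₁) L₂) : Fam k L₁ L₂ :=
  fun m v _ => T m v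

/-- Pushforward of a degree-`0` element along a Taylor family:
`F_*(α) = ∑_{j ≥ 1} (1/j!) F'(α^j)` (a limit in the filtration topology). -/
noncomputable def pushElD (B : FSLie k L₂) (T : Fam k L₁ L₂) (α : L₁) : L₂ :=
  limF k B.filt (fun j => if j = 0 then 0 else ((j.factorial : k)⁻¹) • T j (fun _ => α) (fun _ => 0))

/-- Twist of a Taylor family by a degree-`0` element `α` of the source:
`(F^α)'(v₁ ⋯ v_m) = ∑_{j ≥ 0} (1/j!) F'(α^j v₁ ⋯ v_m)`. -/
noncomputable def twistFamD (B : FSLie k L₂) (T : Fam k L₁ L₂) (α : L₁) : Fam k L₁ L₂ :=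
  fun m v d => limF k B.filt
    (fun j => ((j.factorial : k)⁻¹) •
      T (j + m) (Fin.append (fun _ : Fin j => α) v) (Fin.append (fun _ : Fin j => (0 : ℤ)) d))

/-- Composition of Taylor families: `(G ∘ F)'(v₁ ⋯ v_m) = ∑ ± G'(F'(b₁), …, F'(b_t))`
over partitions of `{1,…,m}` into blocks `b₁, …, b_t`. -/
def compFam (S : Fam k L₂ L₃) (T : Fam k L₁ L₂) : Fam k L₁ L₃ :=
  fun m v d =>
    ∑ t ∈ (Finset.Icc 1 m).attach, ∑ c ∈ (compositions t.1 m).attach,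
      ∑ τ ∈ blockShuffles c.1 m,
        koszulSign k τ d •
          S t.1 (fun a => T (c.1 a) (fun j => v (blockIdx c.2 τ a j))
              (fun j => d (blockIdx c.2 τ a j)))
            (fun a => ∑ j, d (blockIdx c.2 τ a j))

/-- Composition of enhanced morphisms, at the level of the underlying data
`(MC element, Taylor family)`:
`(α₃, G) ∘ (α₂, F) = (α₃ + G_*(α₂), G^{α₂} ∘ F)`. -/
noncomputable def enhComp (C : FSLie k L₃) (g : L₃ × Fam k L₂ L₃) (f : L₂ × Fam k L₁ L₂) :
    L₃ × Fam k L₁ L₃ :=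
  (g.1 + pushElD k C g.2 f.1, compFam k (twistFamD k C g.2 f.1) f.2)

end Fam

/-! ## STATEMENT 2
For any degree-`0` element `α` and any `v`,
`∂^α (∂^α v) = - {curv α, v}^α`, where `{·,·}^α` is the twisted binary bracket. -/
section ShuffleComb
open Finset

lemma mem_shuffles {p m : ℕ} {σ : Equiv.Perm (Fin m)} :
    σ ∈ shuffles p m ↔
      ((∀ i j : Fin m, i < j → (j : ℕ) < p → σ i < σ j) ∧
       (∀ i j : Fin m, i < j → p ≤ (i : ℕ) → σ i < σ j)) := by
  simp [shuffles]

/-- The set of values taken by a permutation on the first `p` positions. -/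
def frontSet {m : ℕ} (p : ℕ) (σ : Equiv.Perm (Fin m)) : Finset (Fin m) :=
  (Finset.univ.filter (fun i : Fin m => (i : ℕ) < p)).image σ

lemma mem_frontSet {m p : ℕ} {σ : Equiv.Perm (Fin m)} {x : Fin m} :
    x ∈ frontSet p σ ↔ ((σ.symm x : ℕ) < p) := by
  constructor
  · intro hx
    obtain ⟨i, hi, rfl⟩ := Finset.mem_image.mp hx
    simpa using Finset.mem_filter.mp hi
  · intro h
    exact Finset.mem_image.mpr ⟨σ.symm x, Finset.mem_filter.mpr ⟨Finset.mem_univ _, h⟩, by simp⟩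

lemma card_front_positions {m p : ℕ} (hpm : p ≤ m) :
    (Finset.univ.filter (fun i : Fin m => (i : ℕ) < p)).card = p := by
  have : (Finset.univ.filter (fun i : Fin m => (i : ℕ) < p)) =
      (Finset.univ : Finset (Fin p)).image (Fin.castLE hpm) := by
    ext i
    simp only [Finset.mem_filter, Finset.mem_univ, true_and, Finset.mem_image]
    constructor
    · intro h; exact ⟨⟨i.1, h⟩, Fin.ext rfl⟩
    · rintro ⟨j, rfl⟩; exact j.2
  rw [this, Finset.card_image_of_injective _ (Fin.castLE_injective hpm)]
  simp

lemma card_frontSet {m p : ℕ} (hpm : p ≤ m) (σ : Equiv.Perm (Fin m)) :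
    (frontSet p σ).card = p := by
  rw [frontSet, Finset.card_image_of_injective _ σ.injective, card_front_positions hpm]

lemma frontSet_mem_powersetCard {m p : ℕ} (hpm : p ≤ m) (σ : Equiv.Perm (Fin m)) :
    frontSet p σ ∈ Finset.powersetCard p (Finset.univ : Finset (Fin m)) := by
  rw [Finset.mem_powersetCard_univ]; exact card_frontSet hpm σ

lemma shuffle_last_mem_iff {s p : ℕ} (hp : 1 ≤ p) (hpm : p ≤ s + 1)
    {σ : Equiv.Perm (Fin (s + 1))} (hσ : σ ∈ shuffles p (s + 1)) :
    σ ⟨p - 1, by omega⟩ = Fin.last s ↔ Fin.last s ∈ frontSet p σ := by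
  obtain ⟨h1, -⟩ := mem_shuffles.mp hσ
  constructor
  · intro h
    refine Finset.mem_image.mpr ⟨⟨p - 1, by omega⟩, Finset.mem_filter.mpr ⟨Finset.mem_univ _, by simp; omega⟩, h⟩
  · intro h
    have hs : ((σ.symm (Fin.last s) : ℕ)) < p := mem_frontSet.mp h
    have : σ.symm (Fin.last s) = ⟨p - 1, by omega⟩ := by
      by_contra hne
      have hlt : σ.symm (Fin.last s) < ⟨p - 1, by omega⟩ := by
        rw [Fin.lt_def]
        have := Fin.val_ne_of_ne hne
        simp only [] at this ⊢
        omega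
      have := h1 _ _ hlt (by simp; omega)
      rw [Equiv.apply_symm_apply] at this
      exact absurd (Fin.le_last (σ ⟨p - 1, by omega⟩)) (not_le.mpr this)
    rw [← this, Equiv.apply_symm_apply]

lemma shuffles_frontSet_inj {m p : ℕ} (hpm : p ≤ m)
    {σ τ : Equiv.Perm (Fin m)} (hσ : σ ∈ shuffles p m) (hτ : τ ∈ shuffles p m)
    (h : frontSet p σ = frontSet p τ) : σ = τ := by
  obtain ⟨hσ1, hσ2⟩ := mem_shuffles.mp hσ
  obtain ⟨hτ1, hτ2⟩ := mem_shuffles.mp hτ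
  -- front agreement
  have hcard : (frontSet p σ).card = p := card_frontSet hpm σ
  have hfront : ∀ i : Fin p, σ (Fin.castLE hpm i) = τ (Fin.castLE hpm i) := by
    have hmemσ : ∀ x : Fin p, σ (Fin.castLE hpm x) ∈ frontSet p σ := fun x =>
      Finset.mem_image.mpr ⟨_, Finset.mem_filter.mpr ⟨Finset.mem_univ _, x.2⟩, rfl⟩
    have hmemτ : ∀ x : Fin p, τ (Fin.castLE hpm x) ∈ frontSet p σ := fun x => by
      rw [h]; exact Finset.mem_image.mpr ⟨_, Finset.mem_filter.mpr ⟨Finset.mem_univ _, x.2⟩, rfl⟩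
    have hsmσ : StrictMono (fun i : Fin p => σ (Fin.castLE hpm i)) := by
      intro a b hab
      exact hσ1 _ _ (by rwa [Fin.lt_def] at hab ⊢) b.2
    have hsmτ : StrictMono (fun i : Fin p => τ (Fin.castLE hpm i)) := by
      intro a b hab
      exact hτ1 _ _ (by rwa [Fin.lt_def] at hab ⊢) b.2
    have e1 := Finset.orderEmbOfFin_unique hcard hmemσ hsmσ
    have e2 := Finset.orderEmbOfFin_unique hcard hmemτ hsmτ
    intro i
    have := congrFun (e1.trans e2.symm) i
    simpa using this
  -- back agreement
  have hcardc : (frontSet p σ)ᶜ.card = m - p := by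
    rw [Finset.card_compl, card_frontSet hpm σ]; simp
  have hback : ∀ j : Fin (m - p), σ ⟨p + j, by omega⟩ = τ ⟨p + j, by omega⟩ := by
    have hmemσ : ∀ x : Fin (m - p), σ ⟨p + x, by omega⟩ ∈ (frontSet p σ)ᶜ := by
      intro x
      rw [Finset.mem_compl, mem_frontSet]
      simp
    have hmemτ : ∀ x : Fin (m - p), τ ⟨p + x, by omega⟩ ∈ (frontSet p σ)ᶜ := by
      intro x
      rw [Finset.mem_compl]
      simp only [h]
      rw [mem_frontSet]
      simp
    have hsmσ : StrictMono (fun j : Fin (m - p) => σ (⟨p + j, by omega⟩ : Fin m)) := by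
      intro a b hab
      exact hσ2 _ _ (by rw [Fin.lt_def] at hab ⊢; simp; omega) (by simp)
    have hsmτ : StrictMono (fun j : Fin (m - p) => τ (⟨p + j, by omega⟩ : Fin m)) := by
      intro a b hab
      exact hτ2 _ _ (by rw [Fin.lt_def] at hab ⊢; simp; omega) (by simp)
    have e1 := Finset.orderEmbOfFin_unique hcardc hmemσ hsmσ
    have e2 := Finset.orderEmbOfFin_unique hcardc hmemτ hsmτ
    intro j
    have := congrFun (e1.trans e2.symm) j
    simpa using this
  refine Equiv.ext fun x => ?_
  by_cases hx : (x : ℕ) < p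
  · have := hfront ⟨x.1, hx⟩
    simpa [Fin.castLE, Fin.ext_iff] using this
  · have hx2 : (x : ℕ) - p < m - p := by omega
    have := hback ⟨x.1 - p, hx2⟩
    have hxe : (⟨p + (x.1 - p), by omega⟩ : Fin m) = x := Fin.ext (by simp; omega)
    rwa [hxe] at this

lemma shuffles_frontSet_surj {m p : ℕ} (hpm : p ≤ m) (S : Finset (Fin m))
    (hS : S ∈ Finset.powersetCard p (Finset.univ : Finset (Fin m))) :
    ∃ σ ∈ shuffles p m, frontSet p σ = S := by
  have hScard : S.card = p := Finset.mem_powersetCard_univ.mp hS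
  have hSc : Sᶜ.card = m - p := by rw [Finset.card_compl, hScard]; simp
  set f := S.orderEmbOfFin hScard with hf
  set g := Sᶜ.orderEmbOfFin hSc with hg
  set F : Fin m → Fin m := fun i =>
    if h : (i : ℕ) < p then f ⟨i, h⟩ else g ⟨(i : ℕ) - p, by omega⟩ with hF
  have hfmem : ∀ x, f x ∈ S := fun x => Finset.orderEmbOfFin_mem S hScard x
  have hgmem : ∀ x, g x ∈ Sᶜ := fun x => Finset.orderEmbOfFin_mem Sᶜ hSc x
  have hinj : Function.Injective F := by
    intro a b hab
    by_cases ha : (a : ℕ) < p <;> by_cases hb : (b : ℕ) < p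
    · rw [hF] at hab; simp only [dif_pos ha, dif_pos hb] at hab
      have h2 := congrArg Fin.val (f.injective hab)
      simp only [] at h2
      exact Fin.ext h2
    · rw [hF] at hab; simp only [dif_pos ha, dif_neg hb] at hab
      exact absurd (hab ▸ hfmem ⟨a, ha⟩) (by simpa using Finset.mem_compl.mp (hgmem _))
    · rw [hF] at hab; simp only [dif_neg ha, dif_pos hb] at hab
      exact absurd (hab ▸ hgmem ⟨(a:ℕ) - p, by omega⟩)
        (by simp [Finset.mem_compl]; exact hfmem _)
    · rw [hF] at hab; simp only [dif_neg ha, dif_neg hb] at hab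
      have h2 := congrArg Fin.val (g.injective hab)
      simp only [] at h2
      exact Fin.ext (by omega)
  let σ : Equiv.Perm (Fin m) := Equiv.ofBijective F (Finite.injective_iff_bijective.mp hinj)
  have hσF : ∀ x, σ x = F x := fun x => rfl
  have hσmem : σ ∈ shuffles p m := by
    rw [mem_shuffles]
    constructor
    · intro i j hij hj
      have hi : (i : ℕ) < p := lt_trans (by rwa [Fin.lt_def] at hij) hj
      rw [hσF, hσF, hF]
      simp only [dif_pos hi, dif_pos hj]
      exact f.strictMono (by rw [Fin.lt_def]; simpa using (Fin.lt_def.mp hij))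
    · intro i j hij hi
      have hj : p ≤ (j : ℕ) := le_trans hi (le_of_lt (Fin.lt_def.mp hij))
      rw [hσF, hσF, hF]
      simp only [dif_neg (not_lt.mpr hi), dif_neg (not_lt.mpr hj)]
      exact g.strictMono (by rw [Fin.lt_def]; simp; omega)
  refine ⟨σ, hσmem, ?_⟩
  have hsub : frontSet p σ ⊆ S := by
    intro x hx
    obtain ⟨i, hi, rfl⟩ := Finset.mem_image.mp hx
    have hi' : (i : ℕ) < p := by simpa using Finset.mem_filter.mp hi
    rw [hσF, hF]
    simp only [dif_pos hi']
    exact hfmem _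
  exact Finset.eq_of_subset_of_card_le hsub (by rw [hScard, card_frontSet hpm σ])

lemma card_shuffles_filter_last {s p : ℕ} (hp : 1 ≤ p) (hpm : p ≤ s + 1) :
    ((shuffles p (s + 1)).filter
      (fun σ => σ ⟨p - 1, by omega⟩ = Fin.last s)).card = Nat.choose s (p - 1) := by
  have step1 : ((shuffles p (s + 1)).filter (fun σ => σ ⟨p - 1, by omega⟩ = Fin.last s)).card =
      ((Finset.powersetCard p (Finset.univ : Finset (Fin (s + 1)))).filter
        (fun S => Fin.last s ∈ S)).card := by
    refine Finset.card_bij (fun σ _ => frontSet p σ) ?_ ?_ ?_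
    · intro σ hσ
      obtain ⟨h1, h2⟩ := Finset.mem_filter.mp hσ
      exact Finset.mem_filter.mpr ⟨frontSet_mem_powersetCard hpm σ,
        (shuffle_last_mem_iff hp hpm h1).mp h2⟩
    · intro σ hσ τ hτ hst
      exact shuffles_frontSet_inj hpm (Finset.mem_filter.mp hσ).1 (Finset.mem_filter.mp hτ).1 hst
    · intro S hS
      obtain ⟨hS1, hS2⟩ := Finset.mem_filter.mp hS
      obtain ⟨σ, hσ, hfs⟩ := shuffles_frontSet_surj hpm S hS1
      exact ⟨σ, Finset.mem_filter.mpr ⟨hσ,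
        (shuffle_last_mem_iff hp hpm hσ).mpr (hfs ▸ hS2)⟩, hfs⟩
  rw [step1]
  have step2 : ((Finset.powersetCard p (Finset.univ : Finset (Fin (s + 1)))).filter
      (fun S => Fin.last s ∈ S)).card =
      (Finset.powersetCard (p - 1) ((Finset.univ : Finset (Fin (s + 1))).erase (Fin.last s))).card := by
    refine Finset.card_bij (fun S _ => S.erase (Fin.last s)) ?_ ?_ ?_
    · intro S hS
      obtain ⟨hS1, hS2⟩ := Finset.mem_filter.mp hS
      rw [Finset.mem_powersetCard]
      refine ⟨Finset.erase_subset_erase _ (Finset.subset_univ S), ?_⟩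
      rw [Finset.card_erase_of_mem hS2, Finset.mem_powersetCard_univ.mp hS1]
    · intro S hS T hT hst
      obtain ⟨-, hS2⟩ := Finset.mem_filter.mp hS
      obtain ⟨-, hT2⟩ := Finset.mem_filter.mp hT
      have hst' : S.erase (Fin.last s) = T.erase (Fin.last s) := hst
      rw [← Finset.insert_erase hS2, ← Finset.insert_erase hT2, hst']
    · intro T hT
      rw [Finset.mem_powersetCard] at hT
      obtain ⟨hT1, hT2⟩ := hT
      have hnotmem : Fin.last s ∉ T := fun hmem => by
        have := hT1 hmem
        simp at this
      refine ⟨insert (Fin.last s) T, ?_, ?_⟩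
      · refine Finset.mem_filter.mpr ⟨?_, Finset.mem_insert_self _ _⟩
        rw [Finset.mem_powersetCard_univ, Finset.card_insert_of_notMem hnotmem, hT2]
        omega
      · exact Finset.erase_insert hnotmem
  rw [step2, Finset.card_powersetCard]
  congr 1
  rw [Finset.card_erase_of_mem (Finset.mem_univ _)]
  simp

lemma card_shuffles_filter_not_last {s p : ℕ} (hp : 1 ≤ p) (hpm : p ≤ s + 1) :
    ((shuffles p (s + 1)).filter
      (fun σ => ¬ (σ ⟨p - 1, by omega⟩ = Fin.last s))).card = Nat.choose s p := by
  have step1 : ((shuffles p (s + 1)).filter (fun σ => ¬ (σ ⟨p - 1, by omega⟩ = Fin.last s))).card =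
      ((Finset.powersetCard p (Finset.univ : Finset (Fin (s + 1)))).filter
        (fun S => Fin.last s ∉ S)).card := by
    refine Finset.card_bij (fun σ _ => frontSet p σ) ?_ ?_ ?_
    · intro σ hσ
      obtain ⟨h1, h2⟩ := Finset.mem_filter.mp hσ
      exact Finset.mem_filter.mpr ⟨frontSet_mem_powersetCard hpm σ,
        fun hmem => h2 ((shuffle_last_mem_iff hp hpm h1).mpr hmem)⟩
    · intro σ hσ τ hτ hst
      exact shuffles_frontSet_inj hpm (Finset.mem_filter.mp hσ).1 (Finset.mem_filter.mp hτ).1 hst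
    · intro S hS
      obtain ⟨hS1, hS2⟩ := Finset.mem_filter.mp hS
      obtain ⟨σ, hσ, hfs⟩ := shuffles_frontSet_surj hpm S hS1
      refine ⟨σ, Finset.mem_filter.mpr ⟨hσ, fun hq => hS2 ?_⟩, hfs⟩
      rw [← hfs]
      exact (shuffle_last_mem_iff hp hpm hσ).mp hq
  rw [step1]
  have step2 : ((Finset.powersetCard p (Finset.univ : Finset (Fin (s + 1)))).filter
      (fun S => Fin.last s ∉ S)) =
      Finset.powersetCard p ((Finset.univ : Finset (Fin (s + 1))).erase (Fin.last s)) := by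
    ext S
    simp only [Finset.mem_filter, Finset.mem_powersetCard_univ, Finset.mem_powersetCard,
      Finset.subset_erase, Finset.subset_univ, true_and]
    tauto
  rw [step2, Finset.card_powersetCard]
  congr 1
  rw [Finset.card_erase_of_mem (Finset.mem_univ _)]
  simp

end ShuffleComb
set_option linter.unusedSectionVars false
section Alg
open Finset
variable {k : Type} [Field k] [CharZero k] {L : Type} [AddCommGroup L] [Module k L]

lemma koszulSign_eq_one {m : ℕ} (σ : Equiv.Perm (Fin m)) (d : Fin m → ℤ)
    (h : ∀ p1 p2 : Fin m, p1 < p2 → σ p2 < σ p1 → d p1 * d p2 = 0) :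
    koszulSign k σ d = 1 := by
  refine Finset.prod_eq_one ?_
  rintro ⟨p1, p2⟩ hp
  obtain ⟨h1, h2⟩ := (Finset.mem_filter.mp hp).2
  rw [h _ _ h1 h2]
  simp

lemma sum_ite_coord {M : Type} [AddCommMonoid M] {n a : ℕ} (ha : a < n) (z : M) :
    (∑ i : Fin n, if (i : ℕ) = a then z else 0) = z := by
  rw [Finset.sum_eq_single (⟨a, ha⟩ : Fin n)]
  · simp
  · intro b _ hb
    have : (b : ℕ) ≠ a := fun hc => hb (Fin.ext hc)
    simp [this]
  · simp

/-- all-α's with `x` inserted at the end -/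
def endF (α x : L) (n : ℕ) : Fin (n + 1) → L := fun t => if (t : ℕ) = n then x else α

/-- all-α's with `x` at position `n` and `y` at position `n+1` -/
def midF (α x y : L) (n : ℕ) : Fin (n + 2) → L :=
  fun t => if (t : ℕ) = n then x else if (t : ℕ) = n + 1 then y else α

lemma endF_eq_update (α x : L) (n : ℕ) :
    endF α x n = Function.update (fun _ : Fin (n + 1) => α) (Fin.last n) x := by
  funext t
  rw [Function.update_apply]
  by_cases h : (t : ℕ) = n
  · rw [endF, if_pos h, if_pos (Fin.ext h)]
  · rw [endF, if_neg h, if_neg (fun hc => h (by rw [hc]; rfl))]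

lemma midF_eq_update_left (α x y : L) (n : ℕ) :
    midF α x y n =
      Function.update (fun t : Fin (n + 2) => if (t : ℕ) = n + 1 then y else α)
        (⟨n, by omega⟩ : Fin (n + 2)) x := by
  funext t
  rw [Function.update_apply]
  by_cases h : (t : ℕ) = n
  · simp only [midF, if_pos h, if_pos (show t = (⟨n, by omega⟩ : Fin (n + 2)) from Fin.ext h)]
  · simp only [midF, if_neg h,
      if_neg (show ¬ t = (⟨n, by omega⟩ : Fin (n + 2)) from fun hc => h (congrArg Fin.val hc))]

lemma midF_eq_update_right (α x y : L) (n : ℕ) :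
    midF α x y n =
      Function.update (fun t : Fin (n + 2) => if (t : ℕ) = n then x else α)
        (Fin.last (n + 1)) y := by
  funext t
  rw [Function.update_apply]
  by_cases h : (t : ℕ) = n + 1
  · have hn : ¬ ((t : ℕ) = n) := by omega
    simp only [midF, if_neg hn, if_pos h,
      if_pos (show t = Fin.last (n + 1) from Fin.ext h)]
  · simp only [midF,
      if_neg (show ¬ t = Fin.last (n + 1) from fun hc => h (congrArg Fin.val hc))]
    by_cases h2 : (t : ℕ) = n
    · simp only [if_pos h2]
    · simp only [if_neg h2, if_neg h]

/-- `x ↦ {α,…,α,x}` as a linear map -/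
def brEndL (A : FSLie k L) (α : L) (n : ℕ) : L →ₗ[k] L where
  toFun x := A.br (n + 1) (endF α x n)
  map_add' a b := by
    rw [endF_eq_update, endF_eq_update, endF_eq_update, MultilinearMap.map_update_add]
  map_smul' c a := by
    rw [endF_eq_update, endF_eq_update, MultilinearMap.map_update_smul]
    rfl

lemma brEndL_apply (A : FSLie k L) (α : L) (n : ℕ) (x : L) :
    brEndL A α n x = A.br (n + 1) (endF α x n) := rfl

/-- `x ↦ {α,…,α,x,v}` as a linear map in `x` -/
def brMidL (A : FSLie k L) (α v : L) (n : ℕ) : L →ₗ[k] L where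
  toFun x := A.br (n + 2) (midF α x v n)
  map_add' a b := by
    rw [midF_eq_update_left, midF_eq_update_left, midF_eq_update_left,
      MultilinearMap.map_update_add]
  map_smul' c a := by
    rw [midF_eq_update_left, midF_eq_update_left, MultilinearMap.map_update_smul]
    rfl

lemma brMidL_apply (A : FSLie k L) (α v : L) (n : ℕ) (x : L) :
    brMidL A α v n x = A.br (n + 2) (midF α x v n) := rfl

lemma brMidL_add_v (A : FSLie k L) (α v v' : L) (n : ℕ) (x : L) :
    brMidL A α (v + v') n x = brMidL A α v n x + brMidL A α v' n x := by
  rw [brMidL_apply, brMidL_apply, brMidL_apply, midF_eq_update_right,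
    midF_eq_update_right α x v, midF_eq_update_right α x v',
    MultilinearMap.map_update_add]

lemma brMidL_zero_v (A : FSLie k L) (α : L) (n : ℕ) (x : L) :
    brMidL A α (0 : L) n x = 0 := by
  rw [brMidL_apply, midF_eq_update_right, MultilinearMap.map_update_zero]

lemma brEndL_zero_apply (A : FSLie k L) (α : L) (x : L) :
    brEndL A α 0 x = A.br 1 ![x] := by
  rw [brEndL_apply]
  congr 1
  funext t
  have ht : (t : ℕ) = 0 := by omega
  have : t = 0 := Fin.ext ht
  subst this
  simp [endF]

lemma br_congr (A : FSLie k L) {n n' : ℕ} (h : n = n') {w : Fin n → L} {w' : Fin n' → L}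
    (hw : ∀ i : Fin n', w ⟨i.1, h ▸ i.2⟩ = w' i) : A.br n w = A.br n' w' := by
  subst h
  congr 1
  funext i
  exact hw i

lemma br_end_mem_gr (A : FSLie k L) {α : L} (hα : α ∈ A.gr 0) {v : L} {dv : ℤ}
    (hv : v ∈ A.gr dv) (n : ℕ) : A.br (n + 1) (endF α v n) ∈ A.gr (dv + 1) := by
  have h := A.br_degree (n + 1) (endF α v n) (fun t => if (t : ℕ) = n then dv else 0) ?_
  · rwa [sum_ite_coord (by omega)] at h
  · intro i
    by_cases h : (i : ℕ) = n <;> simp [endF, h, hv, hα]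

lemma br_const_mem_gr (A : FSLie k L) {α : L} (hα : α ∈ A.gr 0) (p : ℕ) :
    A.br p (fun _ : Fin p => α) ∈ A.gr 1 := by
  have h := A.br_degree p (fun _ => α) (fun _ => 0) (fun _ => hα)
  simpa using h

lemma br_ite_mem_gr (A : FSLie k L) {α : L} (hα : α ∈ A.gr 0) {v : L} {dv : ℤ}
    (hv : v ∈ A.gr dv) (p a : ℕ) (ha : a < p) :
    A.br p (fun i : Fin p => if (i : ℕ) = a then v else α) ∈ A.gr (dv + 1) := by
  have h := A.br_degree p (fun i : Fin p => if (i : ℕ) = a then v else α)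
    (fun i : Fin p => if (i : ℕ) = a then dv else 0) ?_
  · rwa [sum_ite_coord ha] at h
  · intro i
    by_cases h : (i : ℕ) = a <;> simp [h, hv, hα]

end Alg
set_option linter.unusedSectionVars false
section Alg2
open Finset
variable {k : Type} [Field k] [CharZero k] {L : Type} [AddCommGroup L] [Module k L]

lemma cons_eval {q : ℕ} (x : L) (g : Fin q → L) :
    Fin.cons x g = fun i : Fin (q + 1) =>
      if h : (i : ℕ) = 0 then x else g ⟨(i : ℕ) - 1, by omega⟩ := by
  funext i
  refine Fin.cases ?_ ?_ i
  · simp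
  · intro j
    have hj : ¬ ((Fin.succ j : ℕ) = 0) := by simp
    simp only [Fin.cons_succ, dif_neg hj]
    congr 1

/-- Move a single special element from the head to the end. -/
lemma br_move_cons_end (A : FSLie k L) {α : L} (hα : α ∈ A.gr 0) {x : L} {e : ℤ}
    (hx : x ∈ A.gr e) (n : ℕ) :
    A.br (n + 1) (Fin.cons x (fun _ : Fin n => α)) =
      A.br (n + 1) (endF α x n) := by
  set w : Fin (n + 1) → L := Fin.cons x (fun _ : Fin n => α) with hw
  have hwi : ∀ i : Fin (n + 1), w i = if (i : ℕ) = 0 then x else α := by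
    intro i
    rw [hw, cons_eval]
    by_cases h : (i : ℕ) = 0 <;> simp [h]
  have hcomp : w ∘ (Equiv.swap (0 : Fin (n + 1)) (Fin.last n)) = endF α x n := by
    funext i
    simp only [Function.comp]
    by_cases hl : i = Fin.last n
    · subst hl
      rw [Equiv.swap_apply_right, hwi]
      simp [endF]
    · by_cases h0 : i = 0
      · subst h0
        rw [Equiv.swap_apply_left, hwi]
        have hn : n ≠ 0 := by
          intro hc
          subst hc
          apply hl
          apply Fin.ext
          simp
        have : ¬ ((Fin.last n : ℕ) = 0) := by simp [hn]
        rw [if_neg this]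
        have : ¬ (((0 : Fin (n+1)) : ℕ) = n) := by simp; omega
        rw [endF, if_neg this]
      · rw [Equiv.swap_apply_of_ne_of_ne h0 hl, hwi]
        have h1 : ¬ ((i : ℕ) = 0) := fun hc => h0 (Fin.ext hc)
        have h2 : ¬ ((i : ℕ) = n) := fun hc => hl (Fin.ext (by simpa using hc))
        rw [if_neg h1, endF, if_neg h2]
  have hmem : ∀ i : Fin (n + 1), w i ∈ A.gr (if (i : ℕ) = 0 then e else 0) := by
    intro i
    rw [hwi]
    by_cases h : (i : ℕ) = 0 <;> simp [h, hx, hα]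
  have hsym := A.br_symm (n + 1) (Equiv.swap (0 : Fin (n + 1)) (Fin.last n)) w
    (fun i => if (i : ℕ) = 0 then e else 0) hmem
  rw [hcomp] at hsym
  rw [hsym, koszulSign_eq_one]
  · rw [one_smul]
  · intro p1 p2 hlt _
    by_cases h1 : (p1 : ℕ) = 0
    · have : ¬ ((p2 : ℕ) = 0) := by
        rw [Fin.lt_def] at hlt; omega
      simp [this]
    · simp [h1]

/-- Move a special element from the head to just before the final `v`. -/
lemma br_move_cons_mid (A : FSLie k L) {α : L} (hα : α ∈ A.gr 0) {x v : L} {e dv : ℤ}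
    (hx : x ∈ A.gr e) (hv : v ∈ A.gr dv) (q : ℕ) (hq : 1 ≤ q) :
    A.br (q + 1) (Fin.cons x (fun i : Fin q => if (i : ℕ) = q - 1 then v else α)) =
      A.br (q + 1) (fun t : Fin (q + 1) =>
        if (t : ℕ) = q - 1 then x else if (t : ℕ) = q then v else α) := by
  set w : Fin (q + 1) → L := Fin.cons x (fun i : Fin q => if (i : ℕ) = q - 1 then v else α)
    with hw
  have hwi : ∀ i : Fin (q + 1), w i =
      if (i : ℕ) = 0 then x else if (i : ℕ) = q then v else α := by
    intro i
    rw [hw, cons_eval]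
    dsimp only
    by_cases h : (i : ℕ) = 0
    · simp [h]
    · rw [dif_neg h, if_neg h]
      have hi2 := i.2
      by_cases h2 : (i : ℕ) = q
      · rw [if_pos (by omega : (i : ℕ) - 1 = q - 1), if_pos h2]
      · rw [if_neg (by omega : ¬ ((i : ℕ) - 1 = q - 1)), if_neg h2]
  have hcomp : w ∘ (Equiv.swap (0 : Fin (q + 1)) (⟨q - 1, by omega⟩ : Fin (q + 1))) =
      (fun t : Fin (q + 1) => if (t : ℕ) = q - 1 then x else if (t : ℕ) = q then v else α) := by
    funext i
    simp only [Function.comp]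
    by_cases ha : i = (⟨q - 1, by omega⟩ : Fin (q + 1))
    · subst ha
      rw [Equiv.swap_apply_right, hwi]
      simp
    · by_cases h0 : i = 0
      · subst h0
        rw [Equiv.swap_apply_left, hwi]
        have hq2 : 2 ≤ q := by
          rcases Nat.lt_or_ge q 2 with h | h
          · exfalso; apply ha; exact Fin.ext (by simp; omega)
          · exact h
        rw [if_neg (by simp; omega), if_neg (by simp; omega),
          if_neg (by simp; omega), if_neg (by simp; omega)]
      · rw [Equiv.swap_apply_of_ne_of_ne h0 ha, hwi]
        have h1 : ¬ ((i : ℕ) = 0) := fun hc => h0 (Fin.ext hc)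
        have h2 : ¬ ((i : ℕ) = q - 1) := fun hc => ha (Fin.ext hc)
        rw [if_neg h1, if_neg h2]
  have hmem : ∀ i : Fin (q + 1), w i ∈
      A.gr (if (i : ℕ) = 0 then e else if (i : ℕ) = q then dv else 0) := by
    intro i
    rw [hwi]
    by_cases h : (i : ℕ) = 0
    · simp [h, hx]
    · rw [if_neg h, if_neg h]
      by_cases h2 : (i : ℕ) = q <;> simp [h2, hv, hα]
  have hsym := A.br_symm (q + 1)
    (Equiv.swap (0 : Fin (q + 1)) (⟨q - 1, by omega⟩ : Fin (q + 1))) w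
    (fun i => if (i : ℕ) = 0 then e else if (i : ℕ) = q then dv else 0) hmem
  rw [hcomp] at hsym
  rw [hsym, koszulSign_eq_one]
  · rw [one_smul]
  · intro p1 p2 hlt hinv
    have hne0 : ¬ ((p2 : ℕ) = 0) := by rw [Fin.lt_def] at hlt; omega
    by_cases h2 : (p2 : ℕ) = q
    · exfalso
      have hfix : Equiv.swap (0 : Fin (q + 1)) (⟨q - 1, by omega⟩ : Fin (q + 1)) p2 = p2 := by
        apply Equiv.swap_apply_of_ne_of_ne
        · exact fun hc => hne0 (by rw [hc]; rfl)
        · exact fun hc => by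
            have := congrArg Fin.val hc
            simp at this
            omega
      rw [hfix] at hinv
      have hle : (Equiv.swap (0 : Fin (q + 1)) (⟨q - 1, by omega⟩ : Fin (q + 1)) p1 : ℕ)
          ≤ q := by
        have := (Equiv.swap (0 : Fin (q + 1)) (⟨q - 1, by omega⟩ : Fin (q + 1)) p1).2
        omega
      rw [Fin.lt_def] at hinv
      omega
    · rw [if_neg hne0, if_neg h2, mul_zero]

end Alg2
set_option linter.unusedSectionVars false
section Alg3
open Finset
variable {k : Type} [Field k] [CharZero k] {L : Type} [AddCommGroup L] [Module k L]

lemma const_fin_one (α : L) : (fun _ : Fin 1 => α) = ![α] := by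
  funext t
  have : t = 0 := Fin.ext (by omega)
  subst this
  simp

lemma alpha_mem_filt (A : FSLie k L) (α : L) : α ∈ A.filt 1 := by
  rw [A.filt_one]; trivial

lemma brEndL_mem_filt (A : FSLie k L) (α : L) (i n : ℕ) {x : L} (hx : x ∈ A.filt n) :
    brEndL A α i x ∈ A.filt n := by
  cases i with
  | zero => rw [brEndL_zero_apply]; exact A.filt_diff n x hx
  | succ j =>
    have h := A.filt_br (j + 2) (endF α x (j + 1))
      (fun t : Fin (j + 2) => if (t : ℕ) = j + 1 then n else 1) (by omega) ?_
    · refine A.filt_antitone ?_ h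
      have hle := Finset.single_le_sum
        (f := fun t : Fin (j + 2) => if (t : ℕ) = j + 1 then n else 1)
        (fun _ _ => Nat.zero_le _) (Finset.mem_univ (Fin.last (j + 1)))
      simpa using hle
    · intro t
      by_cases ht : (t : ℕ) = j + 1
      · simp [endF, ht, hx]
      · simp only [endF, if_neg ht]
        exact alpha_mem_filt A α
  
lemma brEndL_mem_filt_decay (A : FSLie k L) (α : L) (i n : ℕ) {x : L} (hx : x ∈ A.filt n) :
    brEndL A α i x ∈ A.filt (i + n) := by
  cases i with
  | zero =>
    rw [brEndL_zero_apply]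
    exact A.filt_antitone (by omega) (A.filt_diff n x hx)
  | succ j =>
    have h := A.filt_br (j + 2) (endF α x (j + 1))
      (fun t : Fin (j + 2) => if (t : ℕ) = j + 1 then n else 1) (by omega) ?_
    · refine A.filt_antitone (le_of_eq ?_) h
      rw [Fin.sum_univ_castSucc]
      have h1 : ∀ t : Fin (j + 1),
          (fun t : Fin (j + 2) => if (t : ℕ) = j + 1 then n else 1) t.castSucc = 1 := by
        intro t
        have := t.2
        simp only [Fin.coe_castSucc]
        rw [if_neg (by omega)]
      rw [Finset.sum_congr rfl (fun t _ => h1 t), Finset.sum_const]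
      simp [add_comm]
    · intro t
      by_cases ht : (t : ℕ) = j + 1
      · simp [endF, ht, hx]
      · simp only [endF, if_neg ht]
        exact alpha_mem_filt A α

lemma brMidL_mem_filt (A : FSLie k L) (α v : L) (i n : ℕ) {x : L} (hx : x ∈ A.filt n) :
    brMidL A α v i x ∈ A.filt n := by
  have h := A.filt_br (i + 2) (midF α x v i)
    (fun t : Fin (i + 2) => if (t : ℕ) = i then n else 1) (by omega) ?_
  · refine A.filt_antitone ?_ h
    have hle := Finset.single_le_sum
      (f := fun t : Fin (i + 2) => if (t : ℕ) = i then n else 1)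
      (fun _ _ => Nat.zero_le _) (Finset.mem_univ (⟨i, by omega⟩ : Fin (i + 2)))
    simpa using hle
  · intro t
    by_cases ht : (t : ℕ) = i
    · simp [midF, ht, hx]
    · simp only [midF, if_neg ht]
      by_cases ht2 : (t : ℕ) = i + 1
      · rw [if_pos ht2, A.filt_one]; trivial
      · rw [if_neg ht2]; exact alpha_mem_filt A α

lemma brMidL_mem_filt_decay (A : FSLie k L) (α v : L) (i n : ℕ) {x : L} (hx : x ∈ A.filt n) :
    brMidL A α v i x ∈ A.filt (i + n + 1) := by
  have h := A.filt_br (i + 2) (midF α x v i)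
    (fun t : Fin (i + 2) => if (t : ℕ) = i then n else 1) (by omega) ?_
  · refine A.filt_antitone (le_of_eq ?_) h
    rw [Fin.sum_univ_castSucc, Fin.sum_univ_castSucc]
    have h1 : ∀ t : Fin i,
        (fun t : Fin (i + 2) => if (t : ℕ) = i then n else 1) t.castSucc.castSucc = 1 := by
      intro t
      have := t.2
      simp only [Fin.coe_castSucc]
      rw [if_neg (by omega)]
    rw [Finset.sum_congr rfl (fun t _ => h1 t), Finset.sum_const]
    have h2 : ((Fin.last i).castSucc : ℕ) = i := by simp
    rw [h2]
    simp [Fin.last]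
  · intro t
    by_cases ht : (t : ℕ) = i
    · simp [midF, ht, hx]
    · simp only [midF, if_neg ht]
      by_cases ht2 : (t : ℕ) = i + 1
      · rw [if_pos ht2, A.filt_one]; trivial
      · rw [if_neg ht2]; exact alpha_mem_filt A α

lemma br_const_mem_filt (A : FSLie k L) (α : L) (p : ℕ) (hp : 1 ≤ p) :
    A.br p (fun _ : Fin p => α) ∈ A.filt p := by
  match p, hp with
  | 1, _ =>
    rw [A.filt_one]; trivial
  | (q+2), _ =>
    have h := A.filt_br (q + 2) (fun _ => α) (fun _ => 1) (by omega)
      (fun _ => alpha_mem_filt A α)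
    refine A.filt_antitone (le_of_eq ?_) h
    rw [Finset.sum_const]
    simp

/-- The terms of the double series for `∂^α ∂^α v`. -/
noncomputable def P1t (A : FSLie k L) (α v : L) (i j : ℕ) : L :=
  ((i.factorial : k)⁻¹ * (j.factorial : k)⁻¹) • brEndL A α i (brEndL A α j v)

/-- The terms of the double series for `{curv α, v}^α`. -/
noncomputable def P2t (A : FSLie k L) (α v : L) (i j : ℕ) : L :=
  ((i.factorial : k)⁻¹ * (j.factorial : k)⁻¹) •
    brMidL A α v i (A.br j (fun _ : Fin j => α))

lemma P1t_mem_filt (A : FSLie k L) (α v : L) (i j : ℕ) :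
    P1t (k := k) A α v i j ∈ A.filt (i + j + 1) := by
  refine Submodule.smul_mem _ _ ?_
  have h1 : brEndL A α j v ∈ A.filt (j + 1) := by
    have := brEndL_mem_filt_decay A α j 1 (x := v) (by rw [A.filt_one]; trivial)
    exact this
  have h2 := brEndL_mem_filt_decay A α i (j + 1) h1
  exact A.filt_antitone (by omega) h2

lemma P2t_mem_filt (A : FSLie k L) (α v : L) (i j : ℕ) :
    P2t (k := k) A α v i j ∈ A.filt (i + j + 1) := by
  refine Submodule.smul_mem _ _ ?_
  cases j with
  | zero =>
    have hz : A.br 0 (fun _ : Fin 0 => α) = 0 := by rw [A.br_zero]; rfl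
    rw [hz, map_zero]
    exact Submodule.zero_mem _
  | succ m =>
    have h1 : A.br (m + 1) (fun _ : Fin (m + 1) => α) ∈ A.filt (m + 1) :=
      br_const_mem_filt A α (m + 1) (by omega)
    have h2 := brMidL_mem_filt_decay A α v i (m + 1) h1
    exact A.filt_antitone (by omega) h2

lemma snoc_const (α x : L) (n : ℕ) :
    (Fin.snoc (fun _ : Fin n => α) x : Fin (n + 1) → L) = endF α x n := by
  funext t
  refine Fin.lastCases ?_ ?_ t
  · simp [endF]
  · intro j
    have hj : ¬ ((j : ℕ) = n) := by have := j.2; omega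
    simp [endF, hj]

lemma append_pair (α c v : L) (n : ℕ) :
    (Fin.append (fun _ : Fin n => α) ![c, v] : Fin (n + 2) → L) = midF α c v n := by
  funext t
  refine Fin.addCases ?_ ?_ t
  · intro j
    have h1 : ¬ ((Fin.castAdd 2 j : ℕ) = n) := by have := j.2; simp; omega
    have h2 : ¬ ((Fin.castAdd 2 j : ℕ) = n + 1) := by have := j.2; simp; omega
    simp only [Fin.append_left, midF, if_neg h1, if_neg h2]
  · intro j
    refine Fin.cases ?_ ?_ j
    · have h1 : ((Fin.natAdd n (0 : Fin 2)) : ℕ) = n := by simp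
      simp only [Fin.append_right, midF, h1, if_pos rfl]
      simp
    · intro j2
      have hj2 : j2 = 0 := Fin.ext (by omega)
      subst hj2
      have h1 : ((Fin.natAdd n (Fin.succ 0 : Fin 2)) : ℕ) = n + 1 := by simp
      simp only [Fin.append_right, midF, h1]
      simp

lemma twDiffSeries_eq (A : FSLie k L) (α x : L) (j : ℕ) :
    twDiffSeries k A α x j = ((j.factorial : k)⁻¹) • brEndL A α j x := by
  rw [twDiffSeries, brEndL_apply, snoc_const]

end Alg3
set_option linter.unusedSectionVars false
section Alg4
open Finset
variable {k : Type} [Field k] [CharZero k] {L : Type} [AddCommGroup L] [Module k L]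

lemma shuffle_sum_eval (A : FSLie k L) {α v : L} (hα : α ∈ A.gr 0) {dv : ℤ}
    (hv : v ∈ A.gr dv) (s p : ℕ) (hp : 1 ≤ p) (hpm : p ≤ s + 1) :
    (∑ σ ∈ shuffles p (s + 1),
      shTerm k A.br A.br (fun i : Fin (s + 1) => if (i : ℕ) = s then v else α)
        (fun i : Fin (s + 1) => if (i : ℕ) = s then dv else 0) p hpm σ)
    = (Nat.choose s (p - 1)) •
        A.br (s + 1 - p + 1)
          (Fin.cons (A.br p (fun i : Fin p => if (i : ℕ) = p - 1 then v else α))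
            (fun _ : Fin (s + 1 - p) => α))
      + (Nat.choose s p) •
        A.br (s + 1 - p + 1)
          (Fin.cons (A.br p (fun _ : Fin p => α))
            (fun i : Fin (s + 1 - p) => if (i : ℕ) = s + 1 - p - 1 then v else α)) := by
  set w : Fin (s + 1) → L := fun i => if (i : ℕ) = s then v else α with hwdef
  set d : Fin (s + 1) → ℤ := fun i => if (i : ℕ) = s then dv else 0 with hddef
  have hsign : ∀ σ : Equiv.Perm (Fin (s + 1)), koszulSign k σ d = 1 := by
    intro σ
    apply koszulSign_eq_one
    intro p1 p2 hlt _
    rw [hddef]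
    simp only []
    by_cases h1 : (p1 : ℕ) = s
    · have h2 : ¬ ((p2 : ℕ) = s) := by
        rw [Fin.lt_def] at hlt
        have := p2.2
        omega
      rw [if_neg h2, mul_zero]
    · rw [if_neg h1, zero_mul]
  rw [← Finset.sum_filter_add_sum_filter_not (shuffles p (s + 1))
    (fun σ => σ ⟨p - 1, by omega⟩ = Fin.last s)]
  congr 1
  · -- case: v goes into the inner bracket
    rw [Finset.sum_congr rfl (g := fun _ =>
        A.br (s + 1 - p + 1)
          (Fin.cons (A.br p (fun i : Fin p => if (i : ℕ) = p - 1 then v else α))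
            (fun _ : Fin (s + 1 - p) => α))) ?_,
      Finset.sum_const, card_shuffles_filter_last hp hpm]
    intro σ hσ
    obtain ⟨hσs, hq⟩ := Finset.mem_filter.mp hσ
    obtain ⟨hc1, hc2⟩ := mem_shuffles.mp hσs
    rw [shTerm, hsign, one_smul]
    have hfront : frontV hpm w σ = fun i : Fin p => if (i : ℕ) = p - 1 then v else α := by
      funext i
      rw [frontV]
      by_cases hi : (i : ℕ) = p - 1
      · have hpos : (⟨(i : ℕ), lt_of_lt_of_le i.2 hpm⟩ : Fin (s + 1)) = ⟨p - 1, by omega⟩ :=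
          Fin.ext hi
        rw [hpos, hq, if_pos hi]
        rw [hwdef]
        simp
      · have hlt2 : (⟨(i : ℕ), lt_of_lt_of_le i.2 hpm⟩ : Fin (s + 1)) < ⟨p - 1, by omega⟩ := by
          have hi2 := i.2
          simp only [Fin.lt_def]
          omega
        have := hc1 _ _ hlt2 (by simp; omega)
        rw [hq, Fin.lt_def] at this
        rw [if_neg hi, hwdef]
        simp only []
        rw [if_neg (by simp at this ⊢; omega)]
    have hback : backV hpm w σ = fun _ : Fin (s + 1 - p) => α := by
      funext j
      rw [backV]
      have hne : σ ⟨p + (j : ℕ), by have := j.2; omega⟩ ≠ Fin.last s := by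
        rw [← hq]
        intro hcon
        have := σ.injective hcon
        have := congrArg Fin.val this
        simp only [] at this
        omega
      rw [hwdef]
      simp only []
      rw [if_neg (fun hc => hne (Fin.ext (by simpa using hc)))]
    rw [hfront, hback]
  · -- case: v stays outside
    rw [Finset.sum_congr rfl (g := fun _ =>
        A.br (s + 1 - p + 1)
          (Fin.cons (A.br p (fun _ : Fin p => α))
            (fun i : Fin (s + 1 - p) => if (i : ℕ) = s + 1 - p - 1 then v else α))) ?_,
      Finset.sum_const, card_shuffles_filter_not_last hp hpm]
    intro σ hσ
    obtain ⟨hσs, hq⟩ := Finset.mem_filter.mp hσ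
    obtain ⟨hc1, hc2⟩ := mem_shuffles.mp hσs
    rw [shTerm, hsign, one_smul]
    -- no front position maps to the last element
    have hnof : ∀ i : Fin (s + 1), (i : ℕ) < p → σ i ≠ Fin.last s := by
      intro i hi hcon
      by_cases hie : (i : ℕ) = p - 1
      · exact hq (by rwa [show (⟨p - 1, by omega⟩ : Fin (s + 1)) = i from Fin.ext hie.symm])
      · have hlt2 : i < (⟨p - 1, by omega⟩ : Fin (s + 1)) := by
          have hi2 := i.2
          simp only [Fin.lt_def]
          omega
        have hcc := hc1 _ _ hlt2 (by simp; omega)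
        rw [hcon] at hcc
        exact absurd (Fin.le_last (σ ⟨p - 1, by omega⟩)) (not_le.mpr hcc)
    -- hence the preimage of the last element sits at the last position
    have hlastpos : σ ⟨s, by omega⟩ = Fin.last s := by
      set t := σ.symm (Fin.last s) with ht
      have hts : σ t = Fin.last s := Equiv.apply_symm_apply σ _
      have htp : p ≤ (t : ℕ) := by
        by_contra hcon
        exact hnof t (by omega) hts
      by_cases hts2 : (t : ℕ) = s
      · rwa [show (⟨s, by omega⟩ : Fin (s + 1)) = t from Fin.ext hts2.symm]
      · exfalso
        have hlt2 : t < (⟨s, by omega⟩ : Fin (s + 1)) := by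
          have ht2 := t.2
          simp only [Fin.lt_def]
          simp
          omega
        have hcc := hc2 _ _ hlt2 htp
        rw [hts] at hcc
        exact absurd (Fin.le_last (σ ⟨s, by omega⟩)) (not_le.mpr hcc)
    have hfront : frontV hpm w σ = fun _ : Fin p => α := by
      funext i
      rw [frontV]
      have hne := hnof ⟨(i : ℕ), lt_of_lt_of_le i.2 hpm⟩ i.2
      rw [hwdef]
      simp only []
      rw [if_neg (fun hc => hne (Fin.ext (by simpa using hc)))]
    have hback : backV hpm w σ =
        fun i : Fin (s + 1 - p) => if (i : ℕ) = s + 1 - p - 1 then v else α := by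
      funext j
      rw [backV]
      have hj2 := j.2
      by_cases hj : (j : ℕ) = s + 1 - p - 1
      · have hps : p + (j : ℕ) = s := by omega
        have hpos : (⟨p + (j : ℕ), by omega⟩ : Fin (s + 1)) = ⟨s, by omega⟩ := Fin.ext hps
        rw [hpos, hlastpos, if_pos hj, hwdef]
        simp
      · have hne : σ ⟨p + (j : ℕ), by have := j.2; omega⟩ ≠ Fin.last s := by
          rw [← hlastpos]
          intro hcon
          have := congrArg Fin.val (σ.injective hcon)
          simp only [] at this
          omega
        rw [if_neg hj, hwdef]
        simp only []
        rw [if_neg (fun hc => hne (Fin.ext (by simpa using hc)))]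
    rw [hfront, hback]

end Alg4
set_option linter.unusedSectionVars false
set_option maxHeartbeats 1000000
section Alg5
open Finset
variable {k : Type} [Field k] [CharZero k] {L : Type} [AddCommGroup L] [Module k L]

lemma sum_Icc_reindex {M : Type} [AddCommMonoid M] (s : ℕ) (f : ℕ → M) :
    ∑ p ∈ Finset.Icc 1 (s + 1), f p = ∑ y ∈ Finset.range (s + 1), f (s + 1 - y) := by
  refine Finset.sum_nbij' (fun p => s + 1 - p) (fun y => s + 1 - y)
    (fun a ha => ?_) (fun a ha => ?_) (fun a ha => ?_) (fun a ha => ?_) (fun a ha => ?_)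
  · simp only [Finset.mem_Icc] at ha; simp only [Finset.mem_range]; omega
  · simp only [Finset.mem_range] at ha; simp only [Finset.mem_Icc]; omega
  · simp only [Finset.mem_Icc] at ha; omega
  · simp only [Finset.mem_range] at ha; omega
  · simp only [Finset.mem_Icc] at ha; congr 1; omega

lemma coeff_id (s y : ℕ) (hy : y ≤ s) :
    (s.factorial : k)⁻¹ * (Nat.choose s (s - y) : k) =
      (y.factorial : k)⁻¹ * ((s - y).factorial : k)⁻¹ := by
  rw [Nat.choose_symm hy]
  have hfac := Nat.choose_mul_factorial_mul_factorial hy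
  have hc : ((Nat.choose s y : k)) * (y.factorial : k) * ((s - y).factorial : k) =
      (s.factorial : k) := by
    exact_mod_cast congrArg (Nat.cast : ℕ → k) hfac
  have h1 : ((s - y).factorial : k) ≠ 0 := Nat.cast_ne_zero.mpr (Nat.factorial_ne_zero _)
  have h2 : (y.factorial : k) ≠ 0 := Nat.cast_ne_zero.mpr (Nat.factorial_ne_zero _)
  have h3 : (s.factorial : k) ≠ 0 := Nat.cast_ne_zero.mpr (Nat.factorial_ne_zero _)
  field_simp
  linear_combination hc

lemma key_homog (A : FSLie k L) {α : L} (hα : α ∈ A.gr 0) (s : ℕ) {dv : ℤ} {v : L}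
    (hv : v ∈ A.gr dv) :
    ∑ y ∈ Finset.range (s + 1),
      (P1t (k := k) A α v y (s - y) + P2t (k := k) A α v y (s - y)) = 0 := by
  set w : Fin (s + 1) → L := fun i => if (i : ℕ) = s then v else α with hwdef
  set d : Fin (s + 1) → ℤ := fun i => if (i : ℕ) = s then dv else 0 with hddef
  have hwd : ∀ i, w i ∈ A.gr (d i) := by
    intro i
    rw [hwdef, hddef]
    by_cases h : (i : ℕ) = s <;> simp [h, hv, hα]
  have hjac := A.jacobi (s + 1) w d hwd
  rw [Finset.sum_congr rfl (fun q _ =>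
    shuffle_sum_eval A hα hv s q.1 (Finset.mem_Icc.mp q.2).1 (Finset.mem_Icc.mp q.2).2)]
    at hjac
  rw [Finset.sum_attach (Finset.Icc 1 (s + 1)) (fun p =>
      (Nat.choose s (p - 1)) •
        A.br (s + 1 - p + 1)
          (Fin.cons (A.br p (fun i : Fin p => if (i : ℕ) = p - 1 then v else α))
            (fun _ : Fin (s + 1 - p) => α))
      + (Nat.choose s p) •
        A.br (s + 1 - p + 1)
          (Fin.cons (A.br p (fun _ : Fin p => α))
            (fun i : Fin (s + 1 - p) => if (i : ℕ) = s + 1 - p - 1 then v else α)))] at hjac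
  -- multiply by 1/s!
  have hjac2 := congrArg (fun z => (s.factorial : k)⁻¹ • z) hjac
  simp only [smul_zero, Finset.smul_sum, smul_add] at hjac2
  -- reindex Icc 1 (s+1) → range (s+1) via p = s + 1 - y
  rw [sum_Icc_reindex] at hjac2
  -- now hjac2 : ∑ y ∈ range (s+1), (c • (C(s, s+1-y-1) • U (s+1-y)) + c • (C • W)) = 0
  rw [Finset.sum_add_distrib] at hjac2
  have hA : ∀ y ∈ Finset.range (s + 1),
      (s.factorial : k)⁻¹ •
        ((Nat.choose s (s + 1 - y - 1)) •
          A.br (s + 1 - (s + 1 - y) + 1)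
            (Fin.cons (A.br (s + 1 - y)
                (fun i : Fin (s + 1 - y) => if (i : ℕ) = s + 1 - y - 1 then v else α))
              (fun _ : Fin (s + 1 - (s + 1 - y)) => α)))
      = P1t (k := k) A α v y (s - y) := by
    intro y hy
    rw [Finset.mem_range] at hy
    have hXX : A.br (s + 1 - y)
        (fun i : Fin (s + 1 - y) => if (i : ℕ) = s + 1 - y - 1 then v else α) =
        brEndL A α (s - y) v := by
      rw [brEndL_apply]
      refine br_congr A (by omega) ?_
      intro t
      have ht2 := t.2
      simp only [endF]
      by_cases h : (t : ℕ) = s - y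
      · rw [if_pos (by omega), if_pos h]
      · rw [if_neg (by omega), if_neg h]
    rw [br_move_cons_end A hα
      (br_ite_mem_gr A hα hv (s + 1 - y) (s + 1 - y - 1) (by omega)) (s + 1 - (s + 1 - y))]
    have hout : A.br (s + 1 - (s + 1 - y) + 1)
        (endF α (A.br (s + 1 - y)
          (fun i : Fin (s + 1 - y) => if (i : ℕ) = s + 1 - y - 1 then v else α))
          (s + 1 - (s + 1 - y))) = brEndL A α y (brEndL A α (s - y) v) := by
      rw [brEndL_apply A α y]
      refine br_congr A (by omega) ?_
      intro t
      have ht2 := t.2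
      simp only [endF]
      by_cases h : (t : ℕ) = y
      · rw [if_pos (by omega), if_pos h, hXX]
      · rw [if_neg (by omega), if_neg h]
    rw [hout, ← Nat.cast_smul_eq_nsmul k, smul_smul, P1t]
    congr 1
    rw [show s + 1 - y - 1 = s - y from by omega]
    exact coeff_id s y (by omega)
  rw [Finset.sum_congr rfl hA] at hjac2
  have hB : (∑ y ∈ Finset.range (s + 1),
      (s.factorial : k)⁻¹ •
        ((Nat.choose s (s + 1 - y)) •
          A.br (s + 1 - (s + 1 - y) + 1)
            (Fin.cons (A.br (s + 1 - y) (fun _ : Fin (s + 1 - y) => α))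
              (fun i : Fin (s + 1 - (s + 1 - y)) =>
                if (i : ℕ) = s + 1 - (s + 1 - y) - 1 then v else α))))
      = ∑ y ∈ Finset.range (s + 1), P2t (k := k) A α v y (s - y) := by
    rw [Finset.sum_range_succ' _ s, Finset.sum_range_succ]
    have hz1 : (s.factorial : k)⁻¹ •
        ((Nat.choose s (s + 1 - 0)) •
          A.br (s + 1 - (s + 1 - 0) + 1)
            (Fin.cons (A.br (s + 1 - 0) (fun _ : Fin (s + 1 - 0) => α))
              (fun i : Fin (s + 1 - (s + 1 - 0)) =>
                if (i : ℕ) = s + 1 - (s + 1 - 0) - 1 then v else α))) = 0 := by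
      rw [show s + 1 - 0 = s + 1 from rfl, Nat.choose_eq_zero_of_lt (by omega), zero_smul,
        smul_zero]
    have hz2 : P2t (k := k) A α v s (s - s) = 0 := by
      rw [show s - s = 0 from by omega, P2t]
      rw [show A.br 0 (fun _ : Fin 0 => α) = 0 from by rw [A.br_zero]; rfl, map_zero,
        smul_zero]
    rw [hz1, hz2, add_zero, add_zero]
    refine Finset.sum_congr rfl ?_
    intro y hy
    rw [Finset.mem_range] at hy
    have he : s + 1 - (y + 1) = s - y := by omega
    rw [he]
    have hq1 : (1 : ℕ) ≤ s + 1 - (s - y) := by omega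
    rw [br_move_cons_mid A hα (br_const_mem_gr A hα (s - y)) hv (s + 1 - (s - y)) hq1]
    have hout : A.br (s + 1 - (s - y) + 1)
        (fun t : Fin (s + 1 - (s - y) + 1) =>
          if (t : ℕ) = s + 1 - (s - y) - 1 then A.br (s - y) (fun _ : Fin (s - y) => α)
          else if (t : ℕ) = s + 1 - (s - y) then v else α)
        = brMidL A α v y (A.br (s - y) (fun _ : Fin (s - y) => α)) := by
      rw [brMidL_apply]
      refine br_congr A (by omega) ?_
      intro t
      have ht2 := t.2
      simp only [midF]
      by_cases h : (t : ℕ) = y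
      · rw [if_pos (by omega), if_pos h]
      · rw [if_neg (by omega), if_neg h]
        by_cases h2 : (t : ℕ) = y + 1
        · rw [if_pos (by omega), if_pos h2]
        · rw [if_neg (by omega), if_neg h2]
    rw [hout, ← Nat.cast_smul_eq_nsmul k, smul_smul, P2t]
    congr 1
    exact coeff_id s y (by omega)
  rw [hB] at hjac2
  rw [Finset.sum_add_distrib]
  exact hjac2

end Alg5
set_option linter.unusedSectionVars false
set_option maxHeartbeats 1000000
section Alg6
open Finset
variable {k : Type} [Field k] [CharZero k] {L : Type} [AddCommGroup L] [Module k L]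

lemma key_all (A : FSLie k L) {α : L} (hα : α ∈ A.gr 0) (s : ℕ) (v : L) :
    ∑ y ∈ Finset.range (s + 1),
      (P1t (k := k) A α v y (s - y) + P2t (k := k) A α v y (s - y)) = 0 := by
  have hv : v ∈ iSup A.gr := by
    rw [A.internal.submodule_iSup_eq_top]; trivial
  refine Submodule.iSup_induction A.gr
    (motive := fun x => ∑ y ∈ Finset.range (s + 1),
      (P1t (k := k) A α x y (s - y) + P2t (k := k) A α x y (s - y)) = 0) hv
    (fun d x hx => key_homog A hα s hx) ?_ ?_
  · refine Finset.sum_eq_zero fun y _ => ?_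
    have hp1 : P1t (k := k) A α (0 : L) y (s - y) = 0 := by
      rw [P1t, map_zero, map_zero, smul_zero]
    have hp2 : P2t (k := k) A α (0 : L) y (s - y) = 0 := by
      rw [P2t, brMidL_zero_v, smul_zero]
    rw [hp1, hp2, add_zero]
  · intro x z hx hz
    have hterm : ∀ y ∈ Finset.range (s + 1),
        P1t (k := k) A α (x + z) y (s - y) + P2t (k := k) A α (x + z) y (s - y) =
          (P1t (k := k) A α x y (s - y) + P2t (k := k) A α x y (s - y)) +
          (P1t (k := k) A α z y (s - y) + P2t (k := k) A α z y (s - y)) := by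
      intro y _
      rw [P1t, P1t, P1t, P2t, P2t, P2t, map_add, map_add, smul_add, brMidL_add_v, smul_add]
      abel
    rw [Finset.sum_congr rfl hterm, Finset.sum_add_distrib, hx, hz, add_zero]

lemma square_sum_mem_filt (A : FSLie k L) {α : L} (hα : α ∈ A.gr 0) (v : L)
    {n M : ℕ} (hnM : n ≤ M) :
    (∑ q ∈ Finset.range M ×ˢ Finset.range M,
      (P1t (k := k) A α v q.1 q.2 + P2t (k := k) A α v q.1 q.2)) ∈ A.filt n := by
  classical
  rw [← Finset.sum_filter_add_sum_filter_not (Finset.range M ×ˢ Finset.range M)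
    (fun q => q.1 + q.2 < n)]
  refine Submodule.add_mem _ ?_ ?_
  · -- the full antidiagonals sum to zero
    have hset : (Finset.range M ×ˢ Finset.range M).filter (fun q => q.1 + q.2 < n) =
        (Finset.range n).biUnion (fun s => Finset.HasAntidiagonal.antidiagonal s) := by
      ext q
      simp only [Finset.mem_filter, Finset.mem_product, Finset.mem_range,
        Finset.mem_biUnion, Finset.HasAntidiagonal.mem_antidiagonal]
      constructor
      · rintro ⟨⟨h1, h2⟩, h3⟩; exact ⟨q.1 + q.2, h3, rfl⟩
      · rintro ⟨t, ht, rfl⟩; omega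
    rw [hset, Finset.sum_biUnion]
    · rw [Finset.sum_eq_zero]
      · exact Submodule.zero_mem _
      · intro t _
        rw [Finset.Nat.sum_antidiagonal_eq_sum_range_succ_mk
          (fun q => P1t (k := k) A α v q.1 q.2 + P2t (k := k) A α v q.1 q.2) t]
        exact key_all A hα t v
    · intro a _ b _ hab
      simp only [Function.onFun, Finset.disjoint_left]
      intro q hqa hqb
      rw [Finset.HasAntidiagonal.mem_antidiagonal] at hqa hqb
      exact hab (hqa ▸ hqb)
  · refine Submodule.sum_mem _ ?_
    intro q hq
    obtain ⟨-, h2⟩ := Finset.mem_filter.mp hq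
    refine Submodule.add_mem _ ?_ ?_
    · exact A.filt_antitone (by omega) (P1t_mem_filt A α v q.1 q.2)
    · exact A.filt_antitone (by omega) (P2t_mem_filt A α v q.1 q.2)

end Alg6
set_option linter.unusedSectionVars false
set_option maxHeartbeats 1000000

theorem twisted_differential_square_eq_curvature_bracket
    (k : Type) [Field k] [CharZero k] (L : Type) [AddCommGroup L] [Module k L]
    (A : FSLie k L) (α : L) (hα : α ∈ A.gr 0)
    (c : L) (hc : HasFSumF k A.filt (curvSeries k A α) c)
    (d' : L → L)
    (hd' : ∀ x : L, HasFSumF k A.filt (twDiffSeries k A α x) (d' x))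
    (v b : L)
    (hb : HasFSumF k A.filt
      (fun j => ((j.factorial : k)⁻¹) •
        A.br (j + 2) (Fin.append (fun _ : Fin j => α) ![c, v])) b) :
    d' (d' v) = -b := by
  classical
  have hzero : d' (d' v) + b = 0 := by
    apply A.hausdorff
    intro n
    obtain ⟨N1, hN1⟩ := hd' v n
    obtain ⟨N2, hN2⟩ := hd' (d' v) n
    obtain ⟨N3, hN3⟩ := hb n
    obtain ⟨N4, hN4⟩ := hc n
    set M := N1 + N2 + N3 + N4 + n + 1 with hMdef
    set DS1 := ∑ q ∈ Finset.range M ×ˢ Finset.range M, P1t (k := k) A α v q.1 q.2 with hDS1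
    set DS2 := ∑ q ∈ Finset.range M ×ˢ Finset.range M, P2t (k := k) A α v q.1 q.2 with hDS2
    set Sv := ∑ j ∈ Finset.range M, twDiffSeries k A α v j with hSv
    have h1 : d' v - Sv ∈ A.filt n := hN1 M (by omega)
    have h2 : d' (d' v) - ∑ i ∈ Finset.range M, twDiffSeries k A α (d' v) i ∈ A.filt n :=
      hN2 M (by omega)
    have h3 : (∑ i ∈ Finset.range M, twDiffSeries k A α (d' v) i)
        - (∑ i ∈ Finset.range M, ((i.factorial : k)⁻¹) • brEndL A α i Sv) ∈ A.filt n := by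
      rw [← Finset.sum_sub_distrib]
      refine Submodule.sum_mem _ fun i _ => ?_
      rw [twDiffSeries_eq, ← smul_sub, ← map_sub]
      exact Submodule.smul_mem _ _ (brEndL_mem_filt A α i n h1)
    have h4 : (∑ i ∈ Finset.range M, ((i.factorial : k)⁻¹) • brEndL A α i Sv) = DS1 := by
      rw [hDS1, Finset.sum_product']
      refine Finset.sum_congr rfl fun i _ => ?_
      rw [hSv, map_sum, Finset.smul_sum]
      refine Finset.sum_congr rfl fun j _ => ?_
      rw [twDiffSeries_eq, map_smul, smul_smul, P1t]
    have e1 : d' (d' v) - DS1 ∈ A.filt n := by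
      rw [← h4]
      have := Submodule.add_mem _ h2 h3
      rwa [sub_add_sub_cancel] at this
    have h5 : b - ∑ x ∈ Finset.range M, ((x.factorial : k)⁻¹) • brMidL A α v x c
        ∈ A.filt n := by
      have h5a := hN3 M (by omega)
      have heq : (∑ j ∈ Finset.range M, ((j.factorial : k)⁻¹) •
            A.br (j + 2) (Fin.append (fun _ : Fin j => α) ![c, v]))
          = ∑ x ∈ Finset.range M, ((x.factorial : k)⁻¹) • brMidL A α v x c :=
        Finset.sum_congr rfl (fun x _ => by rw [append_pair, brMidL_apply])
      rwa [heq] at h5a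
    have h6 : (∑ x ∈ Finset.range M, ((x.factorial : k)⁻¹) • brMidL A α v x c)
        - (∑ x ∈ Finset.range M, ((x.factorial : k)⁻¹) •
            brMidL A α v x (∑ y ∈ Finset.range M, curvSeries k A α y)) ∈ A.filt n := by
      rw [← Finset.sum_sub_distrib]
      refine Submodule.sum_mem _ fun x _ => ?_
      rw [← smul_sub, ← map_sub]
      exact Submodule.smul_mem _ _ (brMidL_mem_filt A α v x n (hN4 M (by omega)))
    have h7 : (∑ x ∈ Finset.range M, ((x.factorial : k)⁻¹) •
          brMidL A α v x (∑ y ∈ Finset.range M, curvSeries k A α y)) = DS2 := by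
      rw [hDS2, Finset.sum_product']
      refine Finset.sum_congr rfl fun x _ => ?_
      rw [map_sum, Finset.smul_sum]
      refine Finset.sum_congr rfl fun y _ => ?_
      cases y with
      | zero =>
        have hcz : curvSeries k A α 0 = 0 := by rw [curvSeries]; simp
        rw [hcz, map_zero, smul_zero, P2t]
        rw [show A.br 0 (fun _ : Fin 0 => α) = 0 from by rw [A.br_zero]; rfl, map_zero,
          smul_zero]
      | succ m =>
        rw [curvSeries]
        simp only [if_neg (Nat.succ_ne_zero m)]
        rw [map_smul, smul_smul, P2t]
    have e2 : b - DS2 ∈ A.filt n := by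
      rw [← h7]
      have := Submodule.add_mem _ h5 h6
      rwa [sub_add_sub_cancel] at this
    have hDS : DS1 + DS2 ∈ A.filt n := by
      rw [hDS1, hDS2, ← Finset.sum_add_distrib]
      exact square_sum_mem_filt A hα v (by omega)
    have hsplit : d' (d' v) + b = ((d' (d' v) - DS1) + (b - DS2)) + (DS1 + DS2) := by abel
    rw [hsplit]
    exact Submodule.add_mem _ (Submodule.add_mem _ e1 e2) hDS
  exact eq_neg_of_add_eq_zero_left hzero
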